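/- arXiv:2206.02313 — 3 statements merged into one kernel-verified Lean document; each statement's English description precedes it below -/
import Mathlib

section
/- Under Assumptions 1–2 and for every γ > 0 and every δ > 0 with δ̲⋆(δ) > A, there exist a nonempty compact set 𝒜_δ ⊆ [x⋆ − δ, x⋆ + δ], a class-KL function β, and constants κ, λ, c₀ > 0 such that every differentiable function x_a : [0,∞) → ℝ satisfying ẋ_a(t) = −(γ/2)·b₁,δ(x_a(t)) for all t ≥ 0 obeys dist(x_a(t), 𝒜_δ) ≤ β(dist(x_a(0), 𝒜_δ), γ t) for all t ≥ 0, and, if dist(x_a(0), 𝒜_δ) ≤ c₀, also dist(x_a(t), 𝒜_δ) ≤ κ·dist(x_a(0), 𝒜_δ)·e^{−γλt} for all t ≥ 0. (Paper's Lemma 1, item a: the average extremum-seeking system has a globally asymptotically and locally exponentially stable attractor inside a δ-neighbourhood of the minimiser.) -/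
open MeasureTheory Real

noncomputable def deltaStar (α : ℝ → ℝ) (δ : ℝ) : ℝ :=
  2 * ∫ t in (0:ℝ)..(1/2), α (δ * Real.sin (2 * Real.pi * t))

noncomputable def b1 (h : ℝ → ℝ) (δ x : ℝ) : ℝ :=
  2 * ∫ t in (0:ℝ)..1, h (x + δ * Real.sin (2 * Real.pi * t)) * Real.sin (2 * Real.pi * t)

def IsClassKL (β : ℝ → ℝ → ℝ) : Prop :=
  ContinuousOn (Function.uncurry β) (Set.Ici 0 ×ˢ Set.Ici 0) ∧
  (∀ r t : ℝ, 0 ≤ r → 0 ≤ t → 0 ≤ β r t) ∧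
  (∀ t : ℝ, 0 ≤ t → StrictMonoOn (fun r => β r t) (Set.Ici 0) ∧ β 0 t = 0) ∧
  (∀ r : ℝ, 0 ≤ r → AntitoneOn (β r) (Set.Ici 0) ∧
    Filter.Tendsto (β r) Filter.atTop (nhds 0))

open Set



lemma infDist_Icc_eq (a b x : ℝ) (hab : a ≤ b) :
    Metric.infDist x (Set.Icc a b) = max (max (a - x) (x - b)) 0 := by
  rcases lt_or_ge x a with hx | hx
  · have h1 : Metric.infDist x (Set.Icc a b) ≤ a - x := by
      have := Metric.infDist_le_dist_of_mem (x := x) (show a ∈ Set.Icc a b by simp [hab])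
      rwa [Real.dist_eq, abs_sub_comm, abs_of_nonneg (by linarith)] at this
    have h2 : a - x ≤ Metric.infDist x (Set.Icc a b) := by
      by_contra hcon
      push_neg at hcon
      obtain ⟨y, hy, hd⟩ := (Metric.infDist_lt_iff ⟨a, by simp [hab]⟩).1 hcon
      rw [Real.dist_eq] at hd
      have := hy.1
      have : y - x ≤ |x - y| := by rw [abs_sub_comm]; exact le_abs_self _
      linarith
    rw [show max (a-x) (x-b) = a - x from max_eq_left (by linarith),
      max_eq_left (by linarith)]
    linarith
  · rcases le_or_gt x b with hx2 | hx2
    · rw [Metric.infDist_zero_of_mem (by exact ⟨hx, hx2⟩),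
        max_eq_right (max_le (by linarith) (by linarith))]
    · have h1 : Metric.infDist x (Set.Icc a b) ≤ x - b := by
        have := Metric.infDist_le_dist_of_mem (x := x) (show b ∈ Set.Icc a b by simp [hab])
        rwa [Real.dist_eq, abs_of_nonneg (by linarith)] at this
      have h2 : x - b ≤ Metric.infDist x (Set.Icc a b) := by
        by_contra hcon
        push_neg at hcon
        obtain ⟨y, hy, hd⟩ := (Metric.infDist_lt_iff ⟨a, by simp [hab]⟩).1 hcon
        rw [Real.dist_eq] at hd
        have := hy.2
        have : x - y ≤ |x - y| := le_abs_self _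
        linarith
      rw [show max (a-x) (x-b) = x - b from max_eq_right (by linarith),
        max_eq_left (by linarith)]
      linarith

lemma ode_upper_bound (v v' : ℝ → ℝ) (B c : ℝ) (hc : 0 ≤ c)
    (hderiv : ∀ t : ℝ, 0 ≤ t → HasDerivAt v (v' t) t)
    (hdec : ∀ t : ℝ, 0 ≤ t → B < v t → v' t ≤ -c) :
    ∀ t : ℝ, 0 ≤ t → v t ≤ max (v 0 - c * t) B := by
  intro t ht
  by_contra hcon
  push_neg at hcon
  have hBt : B < v t := lt_of_le_of_lt (le_max_right _ _) hcon
  have hv0t : v 0 - c * t < v t := lt_of_le_of_lt (le_max_left _ _) hcon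
  -- continuous extension
  set V : ℝ → ℝ := fun s => v (max s 0) with hV
  have hVcont : Continuous V := by
    apply continuous_iff_continuousAt.2
    intro s
    have h1 : ContinuousAt (fun s : ℝ => max s 0) s :=
      (continuous_id.max continuous_const).continuousAt
    exact ContinuousAt.comp (g := v) (hderiv (max s 0) (le_max_right _ _)).continuousAt h1
  have hVeq : ∀ s : ℝ, 0 ≤ s → V s = v s := fun s hs => by
    simp [hV, max_eq_left hs]
  -- the antitone helper
  have key : ∀ a : ℝ, 0 ≤ a → a ≤ t → (∀ s ∈ Set.Ioo a t, B < v s) →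
      v t + c * t ≤ v a + c * a := by
    intro a ha hat hmid
    have hw : AntitoneOn (fun s => v s + c * s) (Set.Icc a t) := by
      apply antitoneOn_of_deriv_nonpos (convex_Icc a t)
      · intro s hs
        exact (((hderiv s (ha.trans hs.1)).add
          ((hasDerivAt_id s).const_mul c)).continuousAt).continuousWithinAt
      · intro s hs
        rw [interior_Icc] at hs
        exact (((hderiv s (ha.trans hs.1.le)).add
          ((hasDerivAt_id s).const_mul c)).differentiableAt).differentiableWithinAt
      · intro s hs
        rw [interior_Icc] at hs
        have hds : HasDerivAt (fun s => v s + c * s) (v' s + c * 1) s :=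
          (hderiv s (ha.trans hs.1.le)).add ((hasDerivAt_id s).const_mul c)
        rw [hds.deriv]
        have := hdec s (ha.trans hs.1.le) (hmid s hs)
        linarith
    have := hw (Set.left_mem_Icc.2 hat) (Set.right_mem_Icc.2 hat) hat
    dsimp only at this
    linarith
  set S : Set ℝ := Set.Icc 0 t ∩ V ⁻¹' (Set.Iic B) with hS
  rcases S.eq_empty_or_nonempty with hemp | hne
  · have hmid : ∀ s ∈ Set.Ioo (0:ℝ) t, B < v s := by
      intro s hs
      by_contra hb
      push_neg at hb
      have : s ∈ S := ⟨⟨hs.1.le, hs.2.le⟩, by simp [Set.mem_preimage, hVeq s hs.1.le, hb]⟩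
      rw [hemp] at this; exact this
    have := key 0 le_rfl ht hmid
    simp at this
    linarith
  · have hScpt : IsCompact S :=
      (isCompact_Icc).inter_right (IsClosed.preimage hVcont isClosed_Iic)
    set a := sSup S with ha
    have haS : a ∈ S := hScpt.sSup_mem hne
    have ha0 : 0 ≤ a := haS.1.1
    have hat : a ≤ t := haS.1.2
    have hvaB : v a ≤ B := by
      have := haS.2
      rwa [Set.mem_preimage, Set.mem_Iic, hVeq a ha0] at this
    have hmid : ∀ s ∈ Set.Ioo a t, B < v s := by
      intro s hs
      by_contra hb
      push_neg at hb
      have hsS : s ∈ S := ⟨⟨ha0.trans hs.1.le, hs.2.le⟩, by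
        simp [Set.mem_preimage, hVeq s (ha0.trans hs.1.le), hb]⟩
      have := le_csSup hScpt.bddAbove hsS
      exact absurd this (not_le.2 hs.1)
    have := key a ha0 hat hmid
    nlinarith [hc, hat, hBt]

lemma ode_lower_bound (v v' : ℝ → ℝ) (B c : ℝ) (hc : 0 ≤ c)
    (hderiv : ∀ t : ℝ, 0 ≤ t → HasDerivAt v (v' t) t)
    (hinc : ∀ t : ℝ, 0 ≤ t → v t < B → c ≤ v' t) :
    ∀ t : ℝ, 0 ≤ t → min (v 0 + c * t) B ≤ v t := by
  intro t ht
  have := ode_upper_bound (fun s => -v s) (fun s => -v' s) (-B) c hc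
    (fun s hs => (hderiv s hs).neg)
    (fun s hs hb => by
      have := hinc s hs (by linarith)
      linarith) t ht
  rcases le_total (-(v 0) - c * t) (-B) with h | h
  · rw [max_eq_right h] at this
    have : B ≤ v t := by linarith
    exact le_trans (min_le_right _ _) this
  · rw [max_eq_left h] at this
    have : v 0 + c * t ≤ v t := by linarith
    exact le_trans (min_le_left _ _) this



lemma two_pi_ne : (2 * π : ℝ) ≠ 0 := by positivity

lemma comp_sin_int (f : ℝ → ℝ) (a b : ℝ) :
    ∫ t in a..b, f (2 * π * t) = (2*π)⁻¹ * ∫ u in (2*π*a)..(2*π*b), f u := by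
  have := intervalIntegral.integral_comp_mul_left (a := a) (b := b) f two_pi_ne
  simpa [smul_eq_mul] using this

lemma integral_sin_01 : (∫ t in (0:ℝ)..1, Real.sin (2 * π * t)) = 0 := by
  rw [comp_sin_int Real.sin 0 1]
  simp [integral_sin, Real.cos_two_pi]

lemma integral_sin_0half : (∫ t in (0:ℝ)..(1/2), Real.sin (2 * π * t)) = 1 / π := by
  rw [comp_sin_int Real.sin 0 (1/2)]
  have : 2 * π * (1/2) = π := by ring
  rw [this]
  simp [integral_sin, Real.cos_pi]
  field_simp
  ring

lemma sin_nonneg_of_half (t : ℝ) (ht : t ∈ Set.Icc (0:ℝ) (1/2)) :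
    0 ≤ Real.sin (2 * π * t) := by
  apply Real.sin_nonneg_of_nonneg_of_le_pi
  · have := ht.1; positivity
  · nlinarith [ht.2, Real.pi_pos]

lemma shift_half (G : ℝ → ℝ) :
    (∫ t in (1/2:ℝ)..1, G t) = ∫ t in (0:ℝ)..(1/2), G (t + 1/2) := by
  rw [intervalIntegral.integral_comp_add_right (a := 0) (b := 1/2) G (1/2)]
  norm_num

lemma sin_shift (t : ℝ) : Real.sin (2 * π * (t + 1/2)) = - Real.sin (2 * π * t) := by
  have : 2 * π * (t + 1/2) = 2 * π * t + π := by ring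
  rw [this, Real.sin_add_pi]

lemma integral_abs_sin_01 : (∫ t in (0:ℝ)..1, |Real.sin (2 * π * t)|) = 2 / π := by
  have hint : ∀ a b : ℝ, IntervalIntegrable (fun t => |Real.sin (2*π*t)|) volume a b :=
    fun a b => (Continuous.abs (by continuity)).intervalIntegrable a b
  rw [← intervalIntegral.integral_add_adjacent_intervals (a := 0) (b := 1/2) (c := 1)
    (hint 0 (1/2)) (hint (1/2) 1)]
  have h1 : (∫ t in (0:ℝ)..(1/2), |Real.sin (2*π*t)|) = 1/π := by
    rw [intervalIntegral.integral_congr (g := fun t => Real.sin (2*π*t)) ?_]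
    · exact integral_sin_0half
    · intro t ht
      rw [Set.uIcc_of_le (by norm_num)] at ht
      exact abs_of_nonneg (sin_nonneg_of_half t ht)
  have h2 : (∫ t in (1/2:ℝ)..1, |Real.sin (2*π*t)|) = 1/π := by
    rw [shift_half (fun t => |Real.sin (2*π*t)|)]
    have : (∫ t in (0:ℝ)..(1/2), |Real.sin (2*π*(t + 1/2))|)
        = ∫ t in (0:ℝ)..(1/2), |Real.sin (2*π*t)| := by
      apply intervalIntegral.integral_congr
      intro t _
      dsimp only
      rw [sin_shift, abs_neg]
    rw [this, h1]
  rw [h1, h2]; ring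

lemma Fcont (α : ℝ → ℝ) (δ : ℝ) (hδ : 0 ≤ δ) (hαcont : ContinuousOn α (Set.Ici 0)) :
    Continuous (fun t => α (δ * |Real.sin (2*π*t)|)) := by
  apply ContinuousOn.comp_continuous hαcont (by continuity)
  intro t
  have : (0:ℝ) ≤ |Real.sin (2*π*t)| := abs_nonneg _
  exact Set.mem_Ici.2 (by positivity)

lemma integral_alpha_abs (α : ℝ → ℝ) (δ : ℝ) (hδ : 0 ≤ δ)
    (hαcont : ContinuousOn α (Set.Ici 0)) :
    (∫ t in (0:ℝ)..1, α (δ * |Real.sin (2*π*t)|)) = deltaStar α δ := by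
  have hc := Fcont α δ hδ hαcont
  have hint : ∀ a b : ℝ, IntervalIntegrable (fun t => α (δ * |Real.sin (2*π*t)|)) volume a b :=
    fun a b => hc.intervalIntegrable a b
  rw [← intervalIntegral.integral_add_adjacent_intervals (a := 0) (b := 1/2) (c := 1)
    (hint 0 (1/2)) (hint (1/2) 1)]
  have h1 : (∫ t in (0:ℝ)..(1/2), α (δ * |Real.sin (2*π*t)|))
      = ∫ t in (0:ℝ)..(1/2), α (δ * Real.sin (2*π*t)) := by
    apply intervalIntegral.integral_congr
    intro t ht
    rw [Set.uIcc_of_le (by norm_num)] at ht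
    dsimp only
    rw [abs_of_nonneg (sin_nonneg_of_half t ht)]
  have h2 : (∫ t in (1/2:ℝ)..1, α (δ * |Real.sin (2*π*t)|))
      = ∫ t in (0:ℝ)..(1/2), α (δ * |Real.sin (2*π*t)|) := by
    rw [shift_half (fun t => α (δ * |Real.sin (2*π*t)|))]
    apply intervalIntegral.integral_congr
    intro t _
    dsimp only
    rw [sin_shift, abs_neg]
  rw [h2, h1, deltaStar]
  ring

lemma chebyshev_01 (F G : ℝ → ℝ) (hF : Continuous F) (hG : Continuous G)
    (hmono : ∀ x y : ℝ, 0 ≤ (F x - F y) * (G x - G y)) :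
    (∫ x in (0:ℝ)..1, F x) * (∫ x in (0:ℝ)..1, G x) ≤ ∫ x in (0:ℝ)..1, F x * G x := by
  set cF := ∫ x in (0:ℝ)..1, F x with hcF
  set cG := ∫ x in (0:ℝ)..1, G x with hcG
  set cFG := ∫ x in (0:ℝ)..1, F x * G x with hcFG
  have key : ∀ x : ℝ, (∫ y in (0:ℝ)..1, (F x - F y) * (G x - G y))
      = F x * G x - F x * cG - G x * cF + cFG := by
    intro x
    have : (fun y => (F x - F y) * (G x - G y))
        = fun y => F x * G x - F x * G y - G x * F y + F y * G y := by
      funext y; ring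
    rw [this]
    rw [intervalIntegral.integral_add (f := fun y => F x * G x - F x * G y - G x * F y)
        (g := fun y => F y * G y) (by
        apply IntervalIntegrable.sub
        apply IntervalIntegrable.sub
        · exact intervalIntegrable_const
        · exact ((continuous_const.mul hG).intervalIntegrable _ _)
        · exact ((continuous_const.mul hF).intervalIntegrable _ _)
        ) ((hF.mul hG).intervalIntegrable _ _),
      intervalIntegral.integral_sub (f := fun y => F x * G x - F x * G y)
        (g := fun y => G x * F y) (by
        apply IntervalIntegrable.sub
        · exact intervalIntegrable_const
        · exact ((continuous_const.mul hG).intervalIntegrable _ _)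
        ) ((continuous_const.mul hF).intervalIntegrable _ _),
      intervalIntegral.integral_sub (f := fun _ => F x * G x) (g := fun y => F x * G y)
        intervalIntegrable_const
        ((continuous_const.mul hG).intervalIntegrable _ _),
      intervalIntegral.integral_const,
      intervalIntegral.integral_const_mul, intervalIntegral.integral_const_mul]
    simp [smul_eq_mul]
    rfl
  have hnn : (0:ℝ) ≤ ∫ x in (0:ℝ)..1, (F x * G x - F x * cG - G x * cF + cFG) := by
    apply intervalIntegral.integral_nonneg (by norm_num)
    intro x _
    rw [← key x]
    apply intervalIntegral.integral_nonneg (by norm_num)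
    intro y _
    exact hmono x y
  have hexp : (∫ x in (0:ℝ)..1, (F x * G x - F x * cG - G x * cF + cFG))
      = 2 * cFG - 2 * cF * cG := by
    rw [intervalIntegral.integral_add (by
        apply IntervalIntegrable.sub
        apply IntervalIntegrable.sub
        · exact ((hF.mul hG).intervalIntegrable _ _)
        · exact ((hF.mul continuous_const).intervalIntegrable _ _)
        · exact ((hG.mul continuous_const).intervalIntegrable _ _)
        ) intervalIntegrable_const,
      intervalIntegral.integral_sub (f := fun x => F x * G x - F x * cG)
        (g := fun x => G x * cF) (by
        apply IntervalIntegrable.sub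
        · exact ((hF.mul hG).intervalIntegrable _ _)
        · exact ((hF.mul continuous_const).intervalIntegrable _ _)
        ) ((hG.mul continuous_const).intervalIntegrable _ _),
      intervalIntegral.integral_sub (f := fun x => F x * G x) (g := fun x => F x * cG)
        ((hF.mul hG).intervalIntegrable _ _)
        ((hF.mul continuous_const).intervalIntegrable _ _),
      intervalIntegral.integral_const,
      intervalIntegral.integral_mul_const, intervalIntegral.integral_mul_const]
    simp only [smul_eq_mul, one_mul, sub_zero, MulZeroClass.mul_zero]
    ring
  rw [hexp] at hnn
  linarith


section PW
variable (h m α : ℝ → ℝ) (xstar A δ : ℝ)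
variable (hδ : 0 < δ)
  (hhm : ∀ x, |h x - m x| ≤ A)
  (hmα : ∀ x₁ x₂, 0 ≤ (x₁ - xstar) * (x₂ - xstar) → α |x₂ - x₁| ≤ |m x₂ - m x₁|)
  (hmdec : AntitoneOn m (Set.Iic xstar))
  (hminc : MonotoneOn m (Set.Ici xstar))

include hδ hhm hmα hminc in
lemma pw_right (x s : ℝ) (hx : xstar + δ ≤ x) (hs1 : -1 ≤ s) (hs2 : s ≤ 1) :
    (α (δ * |s|) - A) * |s| ≤ (h (x + δ * s) - m x) * s := by
  have hxstar : xstar ≤ x := by linarith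
  rcases le_or_gt 0 s with hs | hs
  · rw [abs_of_nonneg hs]
    apply mul_le_mul_of_nonneg_right _ hs
    have h1 : m (x + δ * s) - A ≤ h (x + δ * s) := by
      have := abs_le.1 (hhm (x + δ * s)); linarith
    have h2 : α (δ * s) ≤ m (x + δ * s) - m x := by
      have hds : 0 ≤ δ * s := mul_nonneg hδ.le hs
      have hp : 0 ≤ (x - xstar) * (x + δ * s - xstar) :=
        mul_nonneg (by linarith) (by linarith)
      have := hmα x (x + δ * s) hp
      have habs : |x + δ * s - x| = δ * s := by
        rw [show x + δ * s - x = δ * s by ring, abs_of_nonneg (by positivity)]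
      rw [habs] at this
      have hle : m x ≤ m (x + δ * s) :=
        hminc (Set.mem_Ici.2 hxstar) (Set.mem_Ici.2 (by nlinarith)) (by nlinarith)
      rwa [abs_of_nonneg (by linarith)] at this
    linarith
  · rw [abs_of_neg hs]
    have key : α (δ * -s) - A ≤ m x - h (x + δ * s) := by
      have h1 : h (x + δ * s) ≤ m (x + δ * s) + A := by
        have := abs_le.1 (hhm (x + δ * s)); linarith
      have hxs : xstar ≤ x + δ * s := by nlinarith
      have h2 : α (δ * -s) ≤ m x - m (x + δ * s) := by
        have hp : 0 ≤ (x + δ * s - xstar) * (x - xstar) :=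
          mul_nonneg (by linarith) (by linarith)
        have := hmα (x + δ * s) x hp
        have habs : |x - (x + δ * s)| = δ * -s := by
          rw [show x - (x + δ * s) = δ * -s by ring, abs_of_nonneg (by nlinarith)]
        rw [habs] at this
        have hle : m (x + δ * s) ≤ m x :=
          hminc (Set.mem_Ici.2 hxs) (Set.mem_Ici.2 hxstar) (by nlinarith)
        rwa [abs_of_nonneg (by linarith)] at this
      linarith
    have := mul_le_mul_of_nonneg_right key (show (0:ℝ) ≤ -s by linarith)
    nlinarith [this]

include hδ hhm hmα hmdec in
lemma pw_left (x s : ℝ) (hx : x ≤ xstar - δ) (hs1 : -1 ≤ s) (hs2 : s ≤ 1) :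
    (h (x + δ * s) - m x) * s ≤ -((α (δ * |s|) - A) * |s|) := by
  have hxstar : x ≤ xstar := by linarith
  rcases le_or_gt 0 s with hs | hs
  · rw [abs_of_nonneg hs]
    have key : h (x + δ * s) - m x ≤ -(α (δ * s) - A) := by
      have h1 : h (x + δ * s) ≤ m (x + δ * s) + A := by
        have := abs_le.1 (hhm (x + δ * s)); linarith
      have hxs : x + δ * s ≤ xstar := by nlinarith
      have h2 : m (x + δ * s) - m x ≤ -α (δ * s) := by
        have hq := mul_nonneg (show (0:ℝ) ≤ xstar - x by linarith)
          (show (0:ℝ) ≤ xstar - (x + δ * s) by linarith)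
        have hp : 0 ≤ (x - xstar) * (x + δ * s - xstar) := by nlinarith [hq]
        have := hmα x (x + δ * s) hp
        have habs : |x + δ * s - x| = δ * s := by
          rw [show x + δ * s - x = δ * s by ring, abs_of_nonneg (by positivity)]
        rw [habs] at this
        have hle : m (x + δ * s) ≤ m x :=
          hmdec (Set.mem_Iic.2 hxstar) (Set.mem_Iic.2 hxs) (by nlinarith)
        rw [abs_of_nonpos (by linarith)] at this
        linarith
      linarith
    nlinarith [mul_le_mul_of_nonneg_right key hs]
  · rw [abs_of_neg hs]
    have key : α (δ * -s) - A ≤ h (x + δ * s) - m x := by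
      have h1 : m (x + δ * s) - A ≤ h (x + δ * s) := by
        have := abs_le.1 (hhm (x + δ * s)); linarith
      have hxs : x + δ * s ≤ xstar := by nlinarith
      have h2 : α (δ * -s) ≤ m (x + δ * s) - m x := by
        have hq := mul_nonneg (show (0:ℝ) ≤ xstar - x by linarith)
          (show (0:ℝ) ≤ xstar - (x + δ * s) by linarith)
        have hp : 0 ≤ (x + δ * s - xstar) * (x - xstar) := by nlinarith [hq]
        have := hmα (x + δ * s) x hp
        have habs : |x - (x + δ * s)| = δ * -s := by
          rw [show x - (x + δ * s) = δ * -s by ring, abs_of_nonneg (by nlinarith)]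
        rw [habs] at this
        have hle : m x ≤ m (x + δ * s) :=
          hmdec (Set.mem_Iic.2 hxs) (Set.mem_Iic.2 hxstar) (by nlinarith)
        rw [abs_of_nonpos (by linarith)] at this
        linarith
      linarith
    nlinarith [mul_le_mul_of_nonneg_right key (show (0:ℝ) ≤ -s by linarith)]

end PW


section B1
variable (h m α : ℝ → ℝ) (xstar A δ : ℝ)

include m xstar in
lemma b1_bounds (hδ : 0 < δ)
    (hhc : Continuous h)
    (hαcont : ContinuousOn α (Set.Ici 0))
    (hαmono : StrictMonoOn α (Set.Ici 0))
    (hhm : ∀ x, |h x - m x| ≤ A)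
    (hmα : ∀ x₁ x₂, 0 ≤ (x₁ - xstar) * (x₂ - xstar) → α |x₂ - x₁| ≤ |m x₂ - m x₁|)
    (hmdec : AntitoneOn m (Set.Iic xstar))
    (hminc : MonotoneOn m (Set.Ici xstar)) :
    (∀ x, xstar + δ ≤ x → 4 / π * (deltaStar α δ - A) ≤ b1 h δ x) ∧
    (∀ x, x ≤ xstar - δ → b1 h δ x ≤ -(4 / π * (deltaStar α δ - A))) := by
  have hπ := Real.pi_pos
  set F : ℝ → ℝ := fun t => α (δ * |Real.sin (2*π*t)|) with hF
  set G : ℝ → ℝ := fun t => |Real.sin (2*π*t)| with hG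
  have hFc : Continuous F := Fcont α δ hδ.le hαcont
  have hsin : Continuous fun t : ℝ => Real.sin (2*π*t) := by fun_prop
  have hGc : Continuous G := hsin.abs
  have hmono : ∀ x y : ℝ, 0 ≤ (F x - F y) * (G x - G y) := by
    intro x y
    have hmem : ∀ z : ℝ, δ * |Real.sin (2*π*z)| ∈ Set.Ici (0:ℝ) := fun z =>
      Set.mem_Ici.2 (mul_nonneg hδ.le (abs_nonneg _))
    rcases le_total (G x) (G y) with hxy | hxy
    · have : F x ≤ F y :=
        hαmono.monotoneOn (hmem x) (hmem y)
          (mul_le_mul_of_nonneg_left hxy hδ.le)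
      nlinarith
    · have : F y ≤ F x :=
        hαmono.monotoneOn (hmem y) (hmem x)
          (mul_le_mul_of_nonneg_left hxy hδ.le)
      nlinarith
  have hcF : (∫ t in (0:ℝ)..1, F t) = deltaStar α δ := integral_alpha_abs α δ hδ.le hαcont
  have hcG : (∫ t in (0:ℝ)..1, G t) = 2 / π := integral_abs_sin_01
  have hcheb := chebyshev_01 F G hFc hGc hmono
  rw [hcF, hcG] at hcheb
  have hFGA : (∫ t in (0:ℝ)..1, (F t - A) * G t)
      = (∫ t in (0:ℝ)..1, F t * G t) - A * (2/π) := by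
    have heq : (fun t => (F t - A) * G t) = fun t => F t * G t - A * G t := by
      funext t; ring
    have i1 : IntervalIntegrable (fun t => F t * G t) volume 0 1 :=
      (hFc.mul hGc).intervalIntegrable _ _
    have i2 : IntervalIntegrable (fun t => A * G t) volume 0 1 :=
      (continuous_const.mul hGc).intervalIntegrable _ _
    rw [heq, intervalIntegral.integral_sub i1 i2,
      intervalIntegral.integral_const_mul, hcG]
  have hlow : deltaStar α δ * (2/π) - A * (2/π)
      ≤ ∫ t in (0:ℝ)..1, (F t - A) * G t := by rw [hFGA]; linarith
  have hxc : ∀ x : ℝ, Continuous fun t => h (x + δ * Real.sin (2*π*t)) := by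
    intro x; fun_prop
  have hbd : ∀ x : ℝ,
      (∫ t in (0:ℝ)..1, (h (x + δ * Real.sin (2*π*t)) - m x) * Real.sin (2*π*t))
        = ∫ t in (0:ℝ)..1, h (x + δ * Real.sin (2*π*t)) * Real.sin (2*π*t) := by
    intro x
    have heq : (fun t => (h (x + δ * Real.sin (2*π*t)) - m x) * Real.sin (2*π*t))
        = fun t => h (x + δ * Real.sin (2*π*t)) * Real.sin (2*π*t)
            - m x * Real.sin (2*π*t) := by
      funext t; ring
    have i1 : IntervalIntegrable
        (fun t => h (x + δ * Real.sin (2*π*t)) * Real.sin (2*π*t)) volume 0 1 :=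
      ((hxc x).mul hsin).intervalIntegrable _ _
    have i2 : IntervalIntegrable (fun t => m x * Real.sin (2*π*t)) volume 0 1 :=
      (continuous_const.mul hsin).intervalIntegrable _ _
    rw [heq, intervalIntegral.integral_sub i1 i2,
      intervalIntegral.integral_const_mul, integral_sin_01]
    ring
  have h4 : 4 / π * (deltaStar α δ - A)
      = 2 * (deltaStar α δ * (2/π) - A * (2/π)) := by field_simp; ring
  have iFGA : IntervalIntegrable (fun t => (F t - A) * G t) volume 0 1 :=
    ((hFc.sub continuous_const).mul hGc).intervalIntegrable _ _
  constructor
  · intro x hx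
    have ihx : IntervalIntegrable
        (fun t => (h (x + δ * Real.sin (2*π*t)) - m x) * Real.sin (2*π*t)) volume 0 1 :=
      (((hxc x).sub continuous_const).mul hsin).intervalIntegrable _ _
    have hmono2 : (∫ t in (0:ℝ)..1, (F t - A) * G t)
        ≤ ∫ t in (0:ℝ)..1, (h (x + δ * Real.sin (2*π*t)) - m x) * Real.sin (2*π*t) := by
      apply intervalIntegral.integral_mono_on (by norm_num) iFGA ihx
      intro t _
      exact pw_right h m α xstar A δ hδ hhm hmα hminc x (Real.sin (2*π*t)) hx
        (Real.neg_one_le_sin _) (Real.sin_le_one _)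
    rw [hbd x] at hmono2
    rw [b1, h4]
    linarith
  · intro x hx
    have ihx : IntervalIntegrable
        (fun t => (h (x + δ * Real.sin (2*π*t)) - m x) * Real.sin (2*π*t)) volume 0 1 :=
      (((hxc x).sub continuous_const).mul hsin).intervalIntegrable _ _
    have hmono2 : (∫ t in (0:ℝ)..1, (h (x + δ * Real.sin (2*π*t)) - m x) * Real.sin (2*π*t))
        ≤ ∫ t in (0:ℝ)..1, -((F t - A) * G t) := by
      apply intervalIntegral.integral_mono_on (by norm_num) ihx iFGA.neg
      intro t _
      exact pw_left h m α xstar A δ hδ hhm hmα hmdec x (Real.sin (2*π*t)) hx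
        (Real.neg_one_le_sin _) (Real.sin_le_one _)
    rw [hbd x, intervalIntegral.integral_neg] at hmono2
    rw [b1, h4]
    linarith

end B1


lemma beta_isKL (c : ℝ) (hc : 0 < c) :
    IsClassKL (fun r t => max (r - c * t) 0 + r * Real.exp (-t)) := by
  refine ⟨?_, ?_, ?_, ?_⟩
  · apply Continuous.continuousOn
    show Continuous fun p : ℝ × ℝ => max (p.1 - c * p.2) 0 + p.1 * Real.exp (-p.2)
    exact ((continuous_fst.sub (continuous_const.mul continuous_snd)).max
      continuous_const).add (continuous_fst.mul (Real.continuous_exp.comp continuous_snd.neg))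
  · intro r t hr _
    exact add_nonneg (le_max_right _ _) (mul_nonneg hr (Real.exp_pos _).le)
  · intro t ht
    constructor
    · intro r1 _ r2 _ h12
      dsimp only
      exact add_lt_add_of_le_of_lt (max_le_max (by linarith) le_rfl)
        (mul_lt_mul_of_pos_right h12 (Real.exp_pos _))
    · simp only [zero_sub, zero_mul, add_zero]
      exact max_eq_right (by nlinarith)
  · intro r hr
    constructor
    · intro t1 ht1 t2 ht2 h12
      dsimp only
      apply add_le_add
      · exact max_le_max (by nlinarith) le_rfl
      · exact mul_le_mul_of_nonneg_left (Real.exp_le_exp.2 (by linarith)) hr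
    · have t1 : Filter.Tendsto (fun t => max (r - c * t) 0) Filter.atTop (nhds 0) := by
        apply Filter.Tendsto.congr' _ tendsto_const_nhds
        filter_upwards [Filter.eventually_ge_atTop (r / c)] with t ht
        have : r ≤ c * t := by
          rw [div_le_iff₀ hc] at ht; linarith
        exact (max_eq_right (by linarith)).symm
      have t2 : Filter.Tendsto (fun t => r * Real.exp (-t)) Filter.atTop (nhds 0) := by
        have := Real.tendsto_exp_neg_atTop_nhds_zero.const_mul r
        simpa using this
      have := t1.add t2
      simpa using this


/-- Lemma 1, item a): the average extremum-seeking system has a globally asymptotically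
and locally exponentially stable attractor inside a `δ`-neighbourhood of the minimiser. -/
theorem stmt0
    (h : ℝ → ℝ) (xstar : ℝ) (m : ℝ → ℝ) (A : ℝ) (α : ℝ → ℝ)
    (hsmooth : ContDiff ℝ (⊤ : ℕ∞) h)
    (hmin : ∀ x, x ≠ xstar → h xstar < h x)
    (hmcont : Continuous m)
    (hA : 0 ≤ A)
    (hαcont : ContinuousOn α (Set.Ici 0))
    (hαmono : StrictMonoOn α (Set.Ici 0))
    (hα0 : α 0 = 0)
    (hαtop : Filter.Tendsto α Filter.atTop Filter.atTop)
    (hαnonneg : ∀ s, 0 ≤ s → 0 ≤ α s)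
    (hhm : ∀ x, |h x - m x| ≤ A)
    (hmα : ∀ x₁ x₂, 0 ≤ (x₁ - xstar) * (x₂ - xstar) → α |x₂ - x₁| ≤ |m x₂ - m x₁|)
    (hmdec : AntitoneOn m (Set.Iic xstar))
    (hminc : MonotoneOn m (Set.Ici xstar)) :
    ∀ γ : ℝ, 0 < γ → ∀ δ : ℝ, 0 < δ → A < deltaStar α δ →
    ∃ (Aδ : Set ℝ) (β : ℝ → ℝ → ℝ) (κ lam c₀ : ℝ),
      Aδ.Nonempty ∧ IsCompact Aδ ∧ Aδ ⊆ Set.Icc (xstar - δ) (xstar + δ) ∧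
      IsClassKL β ∧ 0 < κ ∧ 0 < lam ∧ 0 < c₀ ∧
      ∀ xa : ℝ → ℝ,
        (∀ t : ℝ, 0 ≤ t → HasDerivAt xa (-(γ / 2) * b1 h δ (xa t)) t) →
        ((∀ t : ℝ, 0 ≤ t →
            Metric.infDist (xa t) Aδ ≤ β (Metric.infDist (xa 0) Aδ) (γ * t)) ∧
         (Metric.infDist (xa 0) Aδ ≤ c₀ →
            ∀ t : ℝ, 0 ≤ t →
              Metric.infDist (xa t) Aδ ≤
                κ * Metric.infDist (xa 0) Aδ * Real.exp (-(γ * lam * t)))) := by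
  intro γ hγ δ hδ hAd
  have hπ := Real.pi_pos
  set ε₀ : ℝ := 4 / π * (deltaStar α δ - A) with hε₀def
  have hε₀ : 0 < ε₀ := by
    apply mul_pos (by positivity)
    linarith
  obtain ⟨hR, hL⟩ := b1_bounds h m α xstar A δ hδ hsmooth.continuous hαcont hαmono
    hhm hmα hmdec hminc
  have hab : xstar - δ ≤ xstar + δ := by linarith
  refine ⟨Set.Icc (xstar - δ) (xstar + δ),
    fun r t => max (r - ε₀ / 2 * t) 0 + r * Real.exp (-t),
    Real.exp (2 / ε₀), 1, 1,
    Set.nonempty_Icc.2 hab, isCompact_Icc, subset_rfl,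
    beta_isKL (ε₀ / 2) (by positivity), Real.exp_pos _, one_pos, one_pos, ?_⟩
  intro xa hode
  set cc : ℝ := γ * ε₀ / 2 with hccdef
  have hcc : 0 < cc := by positivity
  have hup := ode_upper_bound xa (fun t => -(γ / 2) * b1 h δ (xa t)) (xstar + δ) cc hcc.le
    hode (fun t _ hgt => by
      have := hR (xa t) hgt.le
      rw [hccdef]
      nlinarith)
  have hlo := ode_lower_bound xa (fun t => -(γ / 2) * b1 h δ (xa t)) (xstar - δ) cc hcc.le
    hode (fun t _ hlt => by
      have := hL (xa t) hlt.le
      rw [hccdef]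
      nlinarith)
  have hd : ∀ t : ℝ, Metric.infDist (xa t) (Set.Icc (xstar - δ) (xstar + δ))
      = max (max ((xstar - δ) - xa t) (xa t - (xstar + δ))) 0 := fun t =>
    infDist_Icc_eq _ _ _ hab
  set d0 : ℝ := Metric.infDist (xa 0) (Set.Icc (xstar - δ) (xstar + δ)) with hd0def
  have hd0nn : 0 ≤ d0 := Metric.infDist_nonneg
  have hd0a : (xstar - δ) - xa 0 ≤ d0 := by
    rw [hd0def, hd 0]; exact le_max_of_le_left (le_max_left _ _)
  have hd0b : xa 0 - (xstar + δ) ≤ d0 := by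
    rw [hd0def, hd 0]; exact le_max_of_le_left (le_max_right _ _)
  have key : ∀ t : ℝ, 0 ≤ t →
      Metric.infDist (xa t) (Set.Icc (xstar - δ) (xstar + δ)) ≤ max (d0 - cc * t) 0 := by
    intro t ht
    rw [hd t]
    have h1 : (xstar - δ) - xa t ≤ max (d0 - cc * t) 0 := by
      have := hlo t ht
      rcases le_total (xa 0 + cc * t) (xstar - δ) with hc | hc
      · rw [min_eq_left hc] at this
        exact le_max_of_le_left (by linarith)
      · rw [min_eq_right hc] at this
        exact le_max_of_le_right (by linarith)
    have h2 : xa t - (xstar + δ) ≤ max (d0 - cc * t) 0 := by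
      have := hup t ht
      rcases le_total (xa 0 - cc * t) (xstar + δ) with hc | hc
      · rw [max_eq_right hc] at this
        exact le_max_of_le_right (by linarith)
      · rw [max_eq_left hc] at this
        exact le_max_of_le_left (by linarith)
    exact max_le (max_le h1 h2) (le_max_right _ _)
  constructor
  · intro t ht
    dsimp only
    have := key t ht
    have harg : d0 - cc * t = d0 - ε₀ / 2 * (γ * t) := by rw [hccdef]; ring
    calc Metric.infDist (xa t) (Set.Icc (xstar - δ) (xstar + δ))
        ≤ max (d0 - cc * t) 0 := this
      _ ≤ max (d0 - ε₀ / 2 * (γ * t)) 0 + d0 * Real.exp (-(γ * t)) := by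
          rw [harg]
          exact le_add_of_nonneg_right (mul_nonneg hd0nn (Real.exp_pos _).le)
  · intro hd01 t ht
    have hkey := key t ht
    rcases le_total d0 (cc * t) with hc | hc
    · have : max (d0 - cc * t) 0 = 0 := max_eq_right (by linarith)
      rw [this] at hkey
      calc Metric.infDist (xa t) (Set.Icc (xstar - δ) (xstar + δ)) ≤ 0 := hkey
        _ ≤ Real.exp (2 / ε₀) * d0 * Real.exp (-(γ * 1 * t)) := by positivity
    · have hγt : γ * t ≤ 2 / ε₀ := by
        have : cc * t ≤ 1 := le_trans hc hd01
        rw [hccdef] at this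
        rw [le_div_iff₀ hε₀]
        nlinarith
      have hexp1 : (1:ℝ) ≤ Real.exp (2 / ε₀) * Real.exp (-(γ * 1 * t)) := by
        rw [← Real.exp_add]
        apply Real.one_le_exp
        linarith
      have : d0 ≤ Real.exp (2 / ε₀) * d0 * Real.exp (-(γ * 1 * t)) := by
        nlinarith [hexp1, hd0nn]
      calc Metric.infDist (xa t) (Set.Icc (xstar - δ) (xstar + δ))
          ≤ max (d0 - cc * t) 0 := hkey
        _ ≤ d0 := max_le (by nlinarith) hd0nn
        _ ≤ _ := this
end

section
/- Let δ > 0, c > 0, and let g : ℝ → ℝ be continuous with g(s₂) − g(s₁) ≥ c(s₂ − s₁) for all −δ ≤ s₁ ≤ s₂ ≤ δ. Then ∫₀¹ g(δ sin(2πt))·sin(2πt) dt ≥ cδ/2. (Quantitative strengthening of the monotone-dither lemma; applied with g = h′ it yields the derivative lower bound ∂b₁,δ/∂x ≥ cδ used to prove local exponential stability in Lemma 1, item b.) -/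
open MeasureTheory Real

/-! Pairing `t` with `t + 1/2` flips the sign of `sin (2πt)`, so the integral over a full period
equals `∫₀^{1/2} (g (δ s) - g (-δ s)) s dt` with `s = sin (2πt) ≥ 0`. Strong monotonicity bounds
the integrand below by `2cδ s²`, and `∫₀^{1/2} sin² (2πt) dt = 1/4`. -/

theorem intervalIntegral_zero_two_mul_eq_integral_add_shift {f : ℝ → ℝ} {p : ℝ}
    (hf : IntervalIntegrable f volume 0 (2 * p)) :
    ∫ t in (0:ℝ)..(2 * p), f t = ∫ t in (0:ℝ)..p, (f t + f (t + p)) := by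
  have hp : p ∈ Set.uIcc 0 (2 * p) := Set.mem_uIcc.2 <| by
    rcases le_total 0 p with h | h <;> [left; right] <;> constructor <;> linarith
  have hf₁ : IntervalIntegrable f volume 0 p := hf.mono_set (Set.uIcc_subset_uIcc_left hp)
  have hf₂ : IntervalIntegrable f volume p (2 * p) := hf.mono_set (Set.uIcc_subset_uIcc_right hp)
  have hshift : ∫ t in p..(2 * p), f t = ∫ t in (0:ℝ)..p, f (t + p) := by
    rw [intervalIntegral.integral_comp_add_right]; ring_nf
  rw [← intervalIntegral.integral_add_adjacent_intervals hf₁ hf₂, hshift,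
    intervalIntegral.integral_add hf₁ (by simpa [two_mul] using hf₂.comp_add_right p)]

theorem integral_sin_two_pi_mul_sq_zero_half :
    ∫ t in (0:ℝ)..(1/2), sin (2 * π * t) ^ 2 = 1 / 4 := by
  rw [intervalIntegral.integral_comp_mul_left (fun x => sin x ^ 2) (by positivity),
    show 2 * π * (1/2) = π by ring, mul_zero, integral_sin_sq]
  simp only [sin_zero, sin_pi, sub_zero, smul_eq_mul]
  field_simp
  ring

theorem mul_sq_le_of_sub_le_sub {g : ℝ → ℝ} {δ c s : ℝ} (hδ : 0 ≤ δ)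
    (hstr : ∀ s₁ s₂ : ℝ, -δ ≤ s₁ → s₁ ≤ s₂ → s₂ ≤ δ → c * (s₂ - s₁) ≤ g s₂ - g s₁)
    (hs₀ : 0 ≤ s) (hs₁ : s ≤ 1) :
    2 * c * δ * s ^ 2 ≤ g (δ * s) * s + g (δ * -s) * -s := by
  have hds : δ * s ≤ δ := mul_le_of_le_one_right hδ hs₁
  have h := hstr (δ * -s) (δ * s) (by nlinarith) (by nlinarith) hds
  nlinarith [mul_le_mul_of_nonneg_right h hs₀]

theorem stmt15_general
    (δ c : ℝ) (hδ : 0 < δ) (g : ℝ → ℝ) (hg : Continuous g)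
    (hstr : ∀ s₁ s₂ : ℝ, -δ ≤ s₁ → s₁ ≤ s₂ → s₂ ≤ δ → c * (s₂ - s₁) ≤ g s₂ - g s₁) :
    c * δ / 2 ≤
      ∫ t in (0:ℝ)..1, g (δ * Real.sin (2 * Real.pi * t)) * Real.sin (2 * Real.pi * t) := by
  set f : ℝ → ℝ := fun t => g (δ * sin (2 * π * t)) * sin (2 * π * t)
  have hf : Continuous f := by fun_prop
  have hsin_shift (t : ℝ) : sin (2 * π * (t + 1/2)) = - sin (2 * π * t) := by
    rw [← sin_add_pi]; ring_nf
  calc c * δ / 2 = ∫ t in (0:ℝ)..(1/2), 2 * c * δ * sin (2 * π * t) ^ 2 := by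
        rw [intervalIntegral.integral_const_mul, integral_sin_two_pi_mul_sq_zero_half]; ring
    _ ≤ ∫ t in (0:ℝ)..(1/2), (f t + f (t + 1/2)) := by
        refine intervalIntegral.integral_mono_on (by norm_num)
          (Continuous.intervalIntegrable (by fun_prop) _ _)
          (Continuous.intervalIntegrable (by fun_prop) _ _) fun t ht => ?_
        simp only [f, hsin_shift]
        exact mul_sq_le_of_sub_le_sub hδ.le hstr
          (sin_nonneg_of_nonneg_of_le_pi (by nlinarith [ht.1, pi_pos]) (by nlinarith [ht.2, pi_pos]))
          (sin_le_one _)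
    _ = ∫ t in (0:ℝ)..1, f t := by
        rw [← intervalIntegral_zero_two_mul_eq_integral_add_shift (hf.intervalIntegrable _ _)]; norm_num

/-- Quantitative strengthening of the monotone-dither lemma. -/
theorem stmt15
    (δ c : ℝ) (hδ : 0 < δ) (hc : 0 < c) (g : ℝ → ℝ) (hg : Continuous g)
    (hstr : ∀ s₁ s₂ : ℝ, -δ ≤ s₁ → s₁ ≤ s₂ → s₂ ≤ δ → c * (s₂ - s₁) ≤ g s₂ - g s₁) :
    c * δ / 2 ≤
      ∫ t in (0:ℝ)..1, g (δ * Real.sin (2 * Real.pi * t)) * Real.sin (2 * Real.pi * t) :=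
  stmt15_general δ c hδ g hg hstr
end

section
/- Let φ : ℝ × ℝ → ℝ satisfy φ(0, x) = x and φ(s + t, x) = φ(s, φ(t, x)) for all s, t, x (a global flow), let g : ℝ → ℝ be continuous and bounded with s ↦ g(φ(s, x)) continuous for each x, and let γ > 0. Define τ(x) := γ∫_{−∞}^0 e^{γs}·g(φ(s, x)) ds. Then for all x₀ ∈ ℝ and all t ∈ ℝ, τ(φ(t, x₀)) = e^{−γt}·τ(x₀) + γ∫₀^t e^{−γ(t − s)}·g(φ(s, x₀)) ds. In particular, the function t ↦ τ(φ(t, x₀)) is the variation-of-constants solution of ẏ = −γy + γ·g(φ(t, x₀)) with y(0) = τ(x₀), so the graph of τ is invariant for the cascade. (Graph-invariance identity in the proof of Lemma 2.) -/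
open MeasureTheory Real Set

/-!
Along the orbit of `x₀`, `τ(φ t x₀)` is the exponentially weighted past average of
`u s = g (φ s x₀)` seen from time `t`: by the flow property and the shift `s ↦ s + t`,
`τ(φ t x₀) = γ e^{-γt} ∫_{-∞}^t e^{γs} u s ds`. Splitting the integral at `0` gives the
variation-of-constants formula.
-/

theorem integral_Iic_comp_add_right (f : ℝ → ℝ) (c t : ℝ) :
    ∫ s in Iic c, f (s + t) = ∫ s in Iic (c + t), f s := by
  have hpre : (fun s : ℝ => s + t) ⁻¹' Iic (c + t) = Iic c := by
    ext s; simp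
  rw [← hpre]
  exact (measurePreserving_add_right volume t).setIntegral_preimage_emb
    (MeasurableEquiv.addRight t).measurableEmbedding f _

theorem integrableOn_exp_mul_mul_Iic {γ : ℝ} (hγ : 0 < γ) {u : ℝ → ℝ}
    (hu : AEStronglyMeasurable u) {M : ℝ} (hM : ∀ s, |u s| ≤ M) (c : ℝ) :
    IntegrableOn (fun s => exp (γ * s) * u s) (Iic c) := by
  refine Integrable.mono' ((integrableOn_exp_mul_Iic hγ c).mul_const M)
    ((by fun_prop : Continuous fun s => exp (γ * s)).aestronglyMeasurable.mul hu).restrict ?_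
  filter_upwards with s
  rw [norm_mul, norm_of_nonneg (exp_pos _).le, Real.norm_eq_abs]
  exact mul_le_mul_of_nonneg_left (hM s) (exp_pos _).le

theorem integral_Iic_exp_mul_comp_add {γ : ℝ} (hγ : 0 < γ) {u : ℝ → ℝ}
    (hu : AEStronglyMeasurable u) {M : ℝ} (hM : ∀ s, |u s| ≤ M) (t : ℝ) :
    γ * ∫ s in Iic 0, exp (γ * s) * u (s + t) =
      exp (-(γ * t)) * (γ * ∫ s in Iic 0, exp (γ * s) * u s) +
        γ * ∫ s in (0 : ℝ)..t, exp (-(γ * (t - s))) * u s := by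
  have hint := integrableOn_exp_mul_mul_Iic hγ hu hM
  have hshift : ∫ s in Iic 0, exp (γ * s) * u (s + t) =
      exp (-(γ * t)) * ∫ s in Iic t, exp (γ * s) * u s := by
    have := integral_Iic_comp_add_right (fun s => exp (-(γ * t)) * (exp (γ * s) * u s)) 0 t
    rw [zero_add] at this
    rw [← integral_const_mul, ← this]
    congr 1 with s
    rw [← mul_assoc, ← exp_add]
    ring_nf
  have hsplit : ∫ s in Iic t, exp (γ * s) * u s =
      (∫ s in Iic 0, exp (γ * s) * u s) + ∫ s in (0 : ℝ)..t, exp (γ * s) * u s := by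
    rw [← intervalIntegral.integral_Iic_sub_Iic (hint 0) (hint t)]
    ring
  have hkernel : ∫ s in (0 : ℝ)..t, exp (-(γ * (t - s))) * u s =
      exp (-(γ * t)) * ∫ s in (0 : ℝ)..t, exp (γ * s) * u s := by
    rw [← intervalIntegral.integral_const_mul]
    congr 1 with s
    rw [← mul_assoc, ← exp_add]
    ring_nf
  rw [hshift, hsplit, hkernel]
  ring

theorem stmt19_general
    (φ : ℝ → ℝ → ℝ) (g : ℝ → ℝ) (γ : ℝ) (hγ : 0 < γ)
    (hflow : ∀ s t x : ℝ, φ (s + t) x = φ s (φ t x))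
    (hgb : ∃ M : ℝ, ∀ y : ℝ, |g y| ≤ M)
    (hcont : ∀ x : ℝ, Continuous fun s => g (φ s x))
    (tau : ℝ → ℝ)
    (htau : ∀ x : ℝ, tau x = γ * ∫ s in Set.Iic (0:ℝ), Real.exp (γ * s) * g (φ s x)) :
    ∀ x₀ t : ℝ,
      tau (φ t x₀) =
        Real.exp (-(γ * t)) * tau x₀ +
          γ * ∫ s in (0:ℝ)..t, Real.exp (-(γ * (t - s))) * g (φ s x₀) := by
  intro x₀ t
  obtain ⟨M, hM⟩ := hgb
  simp only [htau, ← hflow]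
  exact integral_Iic_exp_mul_comp_add hγ (hcont x₀).aestronglyMeasurable (fun s => hM _) t

/-- Graph-invariance identity in the proof of Lemma 2: along the flow `φ`, the function
`τ(x) = γ∫_{−∞}^0 e^{γs} g(φ(s,x)) ds` satisfies the variation-of-constants identity for
`ẏ = −γy + γ g(φ(t, x₀))`, so the graph of `τ` is invariant for the cascade. -/
theorem stmt19
    (φ : ℝ → ℝ → ℝ) (g : ℝ → ℝ) (γ : ℝ) (hγ : 0 < γ)
    (hflow0 : ∀ x : ℝ, φ 0 x = x)
    (hflow : ∀ s t x : ℝ, φ (s + t) x = φ s (φ t x))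
    (hgc : Continuous g)
    (hgb : ∃ M : ℝ, ∀ y : ℝ, |g y| ≤ M)
    (hcont : ∀ x : ℝ, Continuous fun s => g (φ s x))
    (tau : ℝ → ℝ)
    (htau : ∀ x : ℝ, tau x = γ * ∫ s in Set.Iic (0:ℝ), Real.exp (γ * s) * g (φ s x)) :
    ∀ x₀ t : ℝ,
      tau (φ t x₀) =
        Real.exp (-(γ * t)) * tau x₀ +
          γ * ∫ s in (0:ℝ)..t, Real.exp (-(γ * (t - s))) * g (φ s x₀) :=
  stmt19_general φ g γ hγ hflow hgb hcont tau htau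
end
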